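/- arXiv:2104.09983 — 2 statements merged into one kernel-verified Lean document; each statement's English description precedes it below -/
import Mathlib

section
/- Let Y and Z be metric spaces, with Z proper (closed bounded subsets of Z are compact). Let (K_n)_{n∈ℕ} be a nondecreasing sequence of compact subsets of Y whose union is all of Y, and let y ∈ K_0. Let (J_n) be a sequence of reals with J_n ≥ 1 for all n, converging to a real number J. For each n let h_n : Y → Z be a map such that for all x, x' ∈ K_n one has J_n⁻¹ · dist(x, x') ≤ dist(h_n(x), h_n(x')) ≤ J_n · dist(x, x'), and suppose the set {h_n(y) : n ∈ ℕ} is bounded in Z. Then there exists a map h : Y → Z such that for all x, x' ∈ Y one has J⁻¹ · dist(x, x') ≤ dist(h(x), h(x')) ≤ J · dist(x, x'); moreover, for every x ∈ Y there exists a strictly increasing sequence of indices (n_i) such that h_{n_i}(x) → h(x) in Z. -/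
/-!
Take an ultrafilter `U` on `ℕ` finer than `atTop`. For each `x`, the points `h n x` eventually lie
within `(J + 1) · dist x y` of the bounded set `{h n y}`, so by properness of `Z` they converge
along `U`; call the limit `g x`. The bilipschitz inequalities hold for all large `n` on any pair of
points, hence pass to the limit along `U`. Finally a limit along `U ≤ atTop` is a cluster point of
the sequence, and in a metric space a cluster point is the limit of a subsequence.
-/

open Filter Topology Metric Bornology

theorem Monotone.eventually_mem_of_iUnion_eq_univ {Y : Type*} {K : ℕ → Set Y} (hK : Monotone K)
    (hKunion : ⋃ n, K n = Set.univ) (x : Y) : ∀ᶠ n in atTop, x ∈ K n :=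
  let ⟨N, hN⟩ := Set.iUnion_eq_univ_iff.1 hKunion x
  eventually_atTop.2 ⟨N, fun _ hn => hK hn hN⟩

theorem Ultrafilter.exists_tendsto_of_eventually_mem_of_isBounded {ι Z : Type*}
    [PseudoMetricSpace Z] [ProperSpace Z] {U : Ultrafilter ι} {u : ι → Z} {s : Set Z}
    (hs : IsBounded s) (hu : ∀ᶠ n in U, u n ∈ s) : ∃ z, Tendsto u U (𝓝 z) :=
  let ⟨z, _, hz⟩ := hs.isCompact_closure.ultrafilter_le_nhds (U.map u)
    (le_principal_iff.2 (hu.mono fun _ hn => subset_closure hn))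
  ⟨z, hz⟩

theorem le_dist_and_dist_le_of_tendsto {ι Z : Type*} [PseudoMetricSpace Z] {l : Filter ι}
    [l.NeBot] {J a : ℝ} {Jseq : ι → ℝ} {u v : ι → Z} {p q : Z}
    (hJ : Tendsto Jseq l (𝓝 J)) (hu : Tendsto u l (𝓝 p)) (hv : Tendsto v l (𝓝 q))
    (hbounds : ∀ᶠ n in l, (Jseq n)⁻¹ * a ≤ dist (u n) (v n) ∧ dist (u n) (v n) ≤ Jseq n * a) :
    J⁻¹ * a ≤ dist p q ∧ dist p q ≤ J * a := by
  have hdist : Tendsto (fun n => dist (u n) (v n)) l (𝓝 (dist p q)) := hu.dist hv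
  refine ⟨?_, le_of_tendsto_of_tendsto hdist (hJ.mul_const a) (hbounds.mono fun _ hn => hn.2)⟩
  rcases eq_or_ne J 0 with rfl | hJ0
  · simp [dist_nonneg]
  · exact le_of_tendsto_of_tendsto ((hJ.inv₀ hJ0).mul_const a) hdist
      (hbounds.mono fun _ hn => hn.1)

theorem bilipschitz_limit_of_exhaustion_general
    {Y Z : Type*} [MetricSpace Y] [MetricSpace Z] [ProperSpace Z]
    (K : ℕ → Set Y) (hKmono : Monotone K)
    (hKunion : (⋃ n, K n) = Set.univ)
    (y : Y)
    (J : ℝ) (Jseq : ℕ → ℝ)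
    (hJlim : Filter.Tendsto Jseq Filter.atTop (nhds J))
    (h : ℕ → Y → Z)
    (hbilip : ∀ n, ∀ x ∈ K n, ∀ x' ∈ K n,
      (Jseq n)⁻¹ * dist x x' ≤ dist (h n x) (h n x') ∧
        dist (h n x) (h n x') ≤ Jseq n * dist x x')
    (hbdd : Bornology.IsBounded (Set.range fun n => h n y)) :
    ∃ g : Y → Z,
      (∀ x x' : Y,
        J⁻¹ * dist x x' ≤ dist (g x) (g x') ∧ dist (g x) (g x') ≤ J * dist x x') ∧
      ∀ x : Y, ∃ φ : ℕ → ℕ, StrictMono φ ∧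
        Filter.Tendsto (fun i => h (φ i) x) Filter.atTop (nhds (g x)) := by
  set U : Ultrafilter ℕ := Ultrafilter.of atTop
  have hUle : (U : Filter ℕ) ≤ atTop := Ultrafilter.of_le _
  have hbounds : ∀ x x', ∀ᶠ n in atTop, (Jseq n)⁻¹ * dist x x' ≤ dist (h n x) (h n x') ∧
      dist (h n x) (h n x') ≤ Jseq n * dist x x' := fun x x' =>
    ((hKmono.eventually_mem_of_iUnion_eq_univ hKunion x).and
      (hKmono.eventually_mem_of_iUnion_eq_univ hKunion x')).mono
      fun n hn => hbilip n x hn.1 x' hn.2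
  have hlim : ∀ x, ∃ z, Tendsto (fun n => h n x) U (𝓝 z) := fun x =>
    U.exists_tendsto_of_eventually_mem_of_isBounded (hbdd.cthickening (δ := (J + 1) * dist x y))
      <| hUle <| by
        filter_upwards [hbounds x y, hJlim.eventually (gt_mem_nhds (lt_add_one J))]
          with n hn hJn
        exact mem_cthickening_of_dist_le _ _ _ _ (Set.mem_range_self n)
          (hn.2.trans (by gcongr))
  choose g hg using hlim
  refine ⟨g, fun x x' => le_dist_and_dist_le_of_tendsto (hJlim.mono_left hUle) (hg x) (hg x')
    (hUle (hbounds x x')), fun x => ?_⟩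
  exact ((hg x).mapClusterPt.mono hUle).tendsto_subseq

/-- **Extraction of a bilipschitz limit map** (Lemma 5.2).
Let `Y` and `Z` be metric spaces with `Z` proper. Let `K n` be a nondecreasing
exhaustion of `Y` by compact sets, `y ∈ K 0`, and `Jseq n ≥ 1` converging to `J`.
Suppose each `h n : Y → Z` is `Jseq n`-bilipschitz on `K n`, and that the set of
images `{h n y}` is bounded. Then there is a `J`-bilipschitz map `g : Y → Z`,
and each value `g x` is a subsequential limit of the `h n x`. -/
theorem bilipschitz_limit_of_exhaustion
    {Y Z : Type*} [MetricSpace Y] [MetricSpace Z] [ProperSpace Z]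
    (K : ℕ → Set Y) (hKcomp : ∀ n, IsCompact (K n)) (hKmono : Monotone K)
    (hKunion : (⋃ n, K n) = Set.univ)
    (y : Y) (hy : y ∈ K 0)
    (J : ℝ) (Jseq : ℕ → ℝ) (hJone : ∀ n, 1 ≤ Jseq n)
    (hJlim : Filter.Tendsto Jseq Filter.atTop (nhds J))
    (h : ℕ → Y → Z)
    (hbilip : ∀ n, ∀ x ∈ K n, ∀ x' ∈ K n,
      (Jseq n)⁻¹ * dist x x' ≤ dist (h n x) (h n x') ∧
        dist (h n x) (h n x') ≤ Jseq n * dist x x')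
    (hbdd : Bornology.IsBounded (Set.range fun n => h n y)) :
    ∃ g : Y → Z,
      (∀ x x' : Y,
        J⁻¹ * dist x x' ≤ dist (g x) (g x') ∧ dist (g x) (g x') ≤ J * dist x x') ∧
      ∀ x : Y, ∃ φ : ℕ → ℕ, StrictMono φ ∧
        Filter.Tendsto (fun i => h (φ i) x) Filter.atTop (nhds (g x)) :=
  bilipschitz_limit_of_exhaustion_general K hKmono hKunion y J Jseq hJlim h hbilip hbdd
end

section
/- Let z₀ = √(√5 − 2) and define haze(z) = 3.3957 · z(1 − z²)/(1 + z²). Then for every y ∈ [0, 1.0196] there exists a unique z ∈ [z₀, 1] with haze(z) = y. Moreover the resulting inverse is monotonically decreasing: if y₁, y₂ ∈ [0, 1.0196] with y₁ ≤ y₂, and z₁, z₂ ∈ [z₀, 1] satisfy haze(z₁) = y₁ and haze(z₂) = y₂, then z₂ ≤ z₁. -/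
/-!
Clearing denominators, `haze a - haze b` is a positive multiple of
`(b - a) * ((a + b) ^ 2 + a ^ 2 * b ^ 2 - 1)`. Since `z₀` is the positive root of
`z ^ 4 + 4 * z ^ 2 = 1`, the second factor is positive once `z₀ ≤ a < b`, so `haze` is strictly
decreasing on `[z₀, ∞)`. Continuity and the intermediate value theorem on `[z₀, 1]`, where `haze`
runs from `haze z₀ ≈ 1.01966` down to `0`, give the rest.
-/

noncomputable def zZero : ℝ := Real.sqrt (Real.sqrt 5 - 2)

noncomputable def haze (z : ℝ) : ℝ := 3.3957 * (z * (1 - z ^ 2) / (1 + z ^ 2))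

lemma haze_sub_haze (a b : ℝ) :
    haze a - haze b =
      3.3957 * ((b - a) * ((a + b) ^ 2 + a ^ 2 * b ^ 2 - 1)) / ((1 + a ^ 2) * (1 + b ^ 2)) := by
  unfold haze
  field_simp
  ring

lemma sqrt_five_sq : Real.sqrt 5 ^ 2 = 5 := Real.sq_sqrt (by norm_num)

lemma two_lt_sqrt_five : 2 < Real.sqrt 5 := by
  nlinarith [sqrt_five_sq, Real.sqrt_nonneg 5]

lemma zZero_sq : zZero ^ 2 = Real.sqrt 5 - 2 :=
  Real.sq_sqrt (by linarith [two_lt_sqrt_five])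

lemma zZero_pos : 0 < zZero :=
  Real.sqrt_pos.mpr (by linarith [two_lt_sqrt_five])

lemma zZero_pow_four_add_four_mul_sq : zZero ^ 4 + 4 * zZero ^ 2 = 1 := by
  have h : zZero ^ 4 = (zZero ^ 2) ^ 2 := by ring
  rw [h, zZero_sq]
  nlinarith [sqrt_five_sq]

lemma zZero_le_one : zZero ≤ 1 := by
  nlinarith [zZero_pow_four_add_four_mul_sq, zZero_pos]

lemma strictAntiOn_haze : StrictAntiOn haze (Set.Ici zZero) := by
  intro a (ha : zZero ≤ a) b _ hab
  have hz := zZero_pos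
  have hfactor : 0 < (a + b) ^ 2 + a ^ 2 * b ^ 2 - 1 := by
    have hsum : 2 * zZero < a + b := by linarith
    have hprod : zZero ^ 2 ≤ a * b := by nlinarith
    nlinarith [zZero_pow_four_add_four_mul_sq]
  have hdiff : 0 < haze a - haze b := by
    rw [haze_sub_haze]
    have : 0 < b - a := sub_pos.mpr hab
    positivity
  linarith

lemma continuous_haze : Continuous haze := by
  unfold haze
  exact continuous_const.mul <| (by fun_prop : Continuous fun z : ℝ ↦ z * (1 - z ^ 2)).div
    (by fun_prop) fun z ↦ by positivity

lemma haze_one : haze 1 = 0 := by norm_num [haze]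

lemma le_haze_zZero : 1.0196 ≤ haze zZero := by
  have hle_sqrt : (2.2360679 : ℝ) ≤ Real.sqrt 5 := by nlinarith [sqrt_five_sq, Real.sqrt_nonneg 5]
  have hsqrt_le : Real.sqrt 5 ≤ 2.2360680 := by nlinarith [sqrt_five_sq, Real.sqrt_nonneg 5]
  have hle_zZero : (0.485868 : ℝ) ≤ zZero := by nlinarith [zZero_sq, zZero_pos]
  unfold haze
  rw [← mul_div_assoc, le_div_iff₀ (by positivity)]
  nlinarith [zZero_sq]

/-- The function `haze` restricted to `[z₀, 1]` has a well-defined inverse on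
`[0, 1.0196]`: every `y` in that range is attained by a unique `z ∈ [z₀, 1]`,
and the resulting inverse is monotonically decreasing. -/
theorem haze_inverse_exists_and_antitone :
    (∀ y ∈ Set.Icc (0 : ℝ) 1.0196, ∃! z, z ∈ Set.Icc zZero 1 ∧ haze z = y) ∧
    ∀ y₁ ∈ Set.Icc (0 : ℝ) 1.0196, ∀ y₂ ∈ Set.Icc (0 : ℝ) 1.0196, y₁ ≤ y₂ →
      ∀ z₁ ∈ Set.Icc zZero 1, ∀ z₂ ∈ Set.Icc zZero 1,
        haze z₁ = y₁ → haze z₂ = y₂ → z₂ ≤ z₁ := by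
  have hanti : StrictAntiOn haze (Set.Icc zZero 1) :=
    strictAntiOn_haze.mono Set.Icc_subset_Ici_self
  refine ⟨fun y hy ↦ ?_, fun y₁ _ y₂ _ hle z₁ hz₁ z₂ hz₂ h₁ h₂ ↦ ?_⟩
  · have hrange : y ∈ Set.Icc (haze 1) (haze zZero) :=
      ⟨haze_one ▸ hy.1, hy.2.trans le_haze_zZero⟩
    obtain ⟨z, hz, rfl⟩ := intermediate_value_Icc' zZero_le_one
      continuous_haze.continuousOn hrange
    exact ⟨z, ⟨hz, rfl⟩, fun w ⟨hw, hwz⟩ ↦ hanti.injOn hw hz hwz⟩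
  · exact (hanti.le_iff_ge hz₁ hz₂).mp (h₁ ▸ h₂ ▸ hle)
end
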